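/- arXiv:2106.08393 — 2 statements merged into one kernel-verified Lean document; each statement's English description precedes it below -/
import Mathlib

section
/- Let N and m be positive integers and let c : [N] × [m] → [−1/2, 1/2] be arbitrary. Define g : [N] → {−1/2, 1/2} greedily: for each x (in increasing order), g(x) is chosen to minimize Σ_{j=1}^m (Σ_{x'=1}^{x} g(x')·c(x',j))². Then for every j, |Σ_{x=1}^{N} g(x)·c(x,j)| ≤ √(m·N)/4. -/
/-!
Averaging over the two choices `y = ±1/2` gives the identity
`(1/2) Σ_y (y c + S)² = c²/4 + S²`, so the greedy choice raises the potential
`Σ_j (Σ_{x' ≤ x} g x' c x' j)²` by at most `Σ_j (c x j)²/4 ≤ m/16` per step.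
After `N` steps the potential is at most `m N / 16`, and a single one of its
`m` squares is at most that as well.
-/

open Finset

section GreedyStep

variable {ι : Type*} [Fintype ι]

lemma sum_sq_add_half_add_sum_sq_sub_half (S c : ι → ℝ) :
    ∑ j, (S j + 1 / 2 * c j) ^ 2 + ∑ j, (S j + -(1 / 2) * c j) ^ 2
      = 2 * (∑ j, S j ^ 2 + ∑ j, c j ^ 2 / 4) := by
  simp only [← sum_add_distrib, mul_sum]
  exact sum_congr rfl fun j _ => by ring

lemma sum_sq_div_four_le_card_div_sixteen {c : ι → ℝ} (hc : ∀ j, |c j| ≤ 1 / 2) :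
    ∑ j, c j ^ 2 / 4 ≤ (Fintype.card ι : ℝ) / 16 := by
  have hsq : ∀ j, c j ^ 2 / 4 ≤ 1 / 16 := fun j => by
    have := sq_le_sq' (abs_le.mp (hc j)).1 (abs_le.mp (hc j)).2
    linarith
  calc ∑ j, c j ^ 2 / 4 ≤ ∑ _j : ι, (1 / 16 : ℝ) := sum_le_sum fun j _ => hsq j
    _ = Fintype.card ι / 16 := by rw [sum_const, card_univ, nsmul_eq_mul]; ring

lemma le_sum_sq_add_card_div_sixteen_of_le_both_choices {P : ℝ} {S c : ι → ℝ}
    (hc : ∀ j, |c j| ≤ 1 / 2)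
    (hplus : P ≤ ∑ j, (S j + 1 / 2 * c j) ^ 2)
    (hminus : P ≤ ∑ j, (S j + -(1 / 2) * c j) ^ 2) :
    P ≤ ∑ j, S j ^ 2 + Fintype.card ι / 16 := by
  have := sum_sq_add_half_add_sum_sq_sub_half S c
  have := sum_sq_div_four_le_card_div_sixteen hc
  linarith

end GreedyStep

lemma le_mul_of_succ_le_add {a : ℕ → ℝ} {δ : ℝ} {n : ℕ} (h0 : a 0 = 0)
    (hstep : ∀ k < n, a (k + 1) ≤ a k + δ) : a n ≤ n * δ := by
  induction n with
  | zero => simp [h0]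
  | succ n ih =>
    have := ih fun k hk => hstep k (Nat.lt_succ_of_lt hk)
    have := hstep n (Nat.lt_succ_self n)
    push_cast
    linarith

section Potential

variable {N : ℕ} {ι : Type*}

/-- Indexed by `k : ℕ` rather than `Fin N`, so that `k = 0` and `k = N` are the empty and the full
sum and the greedy step at `x` is the passage from `k = x` to `k = x + 1`. -/
def prefixSum (g : Fin N → ℝ) (c : Fin N → ι → ℝ) (k : ℕ) (j : ι) : ℝ :=
  ∑ x ∈ univ.filter (fun x : Fin N => (x : ℕ) < k), g x * c x j

lemma prefixSum_zero (g : Fin N → ℝ) (c : Fin N → ι → ℝ) (j : ι) :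
    prefixSum g c 0 j = 0 := by
  simp [prefixSum]

lemma prefixSum_self (g : Fin N → ℝ) (c : Fin N → ι → ℝ) (j : ι) :
    prefixSum g c N j = ∑ x, g x * c x j := by
  simp [prefixSum]

lemma prefixSum_val (g : Fin N → ℝ) (c : Fin N → ι → ℝ) (x : Fin N) (j : ι) :
    prefixSum g c x j = ∑ x' ∈ univ.filter (· < x), g x' * c x' j := by
  simp only [prefixSum, Fin.lt_def]

lemma prefixSum_val_add_one (g : Fin N → ℝ) (c : Fin N → ι → ℝ) (x : Fin N) (j : ι) :
    prefixSum g c (x + 1) j = ∑ x' ∈ univ.filter (· ≤ x), g x' * c x' j := by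
  simp only [prefixSum, Fin.le_def, Nat.lt_succ_iff]

end Potential

theorem greedy_diagonalization_general (N m : ℕ)
    (c : Fin N → Fin m → ℝ) (hc : ∀ x j, |c x j| ≤ 1 / 2)
    (g : Fin N → ℝ)
    (hgreedy : ∀ x : Fin N, ∀ y : ℝ, (y = 1 / 2 ∨ y = -(1 / 2)) →
      ∑ j, (∑ x' ∈ Finset.univ.filter (· ≤ x), g x' * c x' j) ^ 2
        ≤ ∑ j, ((∑ x' ∈ Finset.univ.filter (· < x), g x' * c x' j) + y * c x j) ^ 2) :
    ∀ j, |∑ x, g x * c x j| ≤ Real.sqrt (m * N) / 4 := by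
  set potential : ℕ → ℝ := fun k => ∑ j, prefixSum g c k j ^ 2
  have hstep : ∀ k < N, potential (k + 1) ≤ potential k + m / 16 := fun k hk => by
    have hgreedy' := hgreedy ⟨k, hk⟩
    simp only [← prefixSum_val, ← prefixSum_val_add_one] at hgreedy'
    simpa using le_sum_sq_add_card_div_sixteen_of_le_both_choices (hc ⟨k, hk⟩)
      (hgreedy' _ (Or.inl rfl)) (hgreedy' _ (Or.inr rfl))
  have hpotential : potential N ≤ N * (m / 16) :=
    le_mul_of_succ_le_add (by simp [potential, prefixSum_zero]) hstep
  intro j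
  have hj : (∑ x, g x * c x j) ^ 2 ≤ m * N / 16 := by
    rw [← prefixSum_self]
    calc prefixSum g c N j ^ 2 ≤ potential N :=
          single_le_sum (f := fun i => prefixSum g c N i ^ 2) (fun i _ => sq_nonneg _)
            (mem_univ j)
      _ ≤ m * N / 16 := by linarith
  rw [show Real.sqrt (m * N) / 4 = Real.sqrt (m * N / 16) by
    rw [Real.sqrt_div' _ (by norm_num : (0 : ℝ) ≤ 16)]; norm_num]
  exact Real.abs_le_sqrt hj

/-- Core diagonalization lemma: a greedily chosen ±1/2-valued function g has
correlation at most √(m·N)/4 with each of the m columns of c. -/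
theorem greedy_diagonalization (N m : ℕ) (hN : 0 < N) (hm : 0 < m)
    (c : Fin N → Fin m → ℝ) (hc : ∀ x j, |c x j| ≤ 1 / 2)
    (g : Fin N → ℝ) (hg : ∀ x, g x = 1 / 2 ∨ g x = -(1 / 2))
    (hgreedy : ∀ x : Fin N, ∀ y : ℝ, (y = 1 / 2 ∨ y = -(1 / 2)) →
      ∑ j, (∑ x' ∈ Finset.univ.filter (· ≤ x), g x' * c x' j) ^ 2
        ≤ ∑ j, ((∑ x' ∈ Finset.univ.filter (· < x), g x' * c x' j) + y * c x j) ^ 2) :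
    ∀ j, |∑ x, g x * c x j| ≤ Real.sqrt (m * N) / 4 :=
  greedy_diagonalization_general N m c hc g hgreedy
end

section
/- Let n' be a positive integer, N = 2^{n'}, and let T' be a uniformly random subset of {0,1}^{n'} of fixed size t. Fix m with t ≤ 2^{m-2}, and let H ⊆ {0,1}^m be the image of T' under a uniformly random linear hash h : {0,1}^{n'} → {0,1}^m (multiplication by a uniform m×n' matrix over 𝔽₂), with n' independent such hashes h₁,...,h_{n'} and images H₁,...,H_{n'}. Then the probability that there exists x ∉ T' with h_i(x) ∈ H_i for all i ∈ {1,...,n'} is at most 2^{n'}·(1/4)^{n'} = 2^{-n'}. -/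
/-!
For `x ≠ u`, the map `B ↦ B *ᵥ (x - u)` is a surjective additive homomorphism onto `K^m`, so a
uniform matrix `B` identifies `x` with `u` with probability exactly `|K|^{-m}`. A union bound
over `u ∈ T'` shows that a single hash sends a fixed `x ∉ T'` into the image of `T'` with
probability at most `t / 2^m ≤ 1/4`; the `n'` hashes are independent, and a union bound over the
at most `2^{n'}` points `x ∉ T'` gives `2^{n'} (1/4)^{n'}`.
-/

open Finset

theorem AddMonoidHom.card_ker_mul_card_of_surjective {G H : Type*} [AddGroup G] [AddGroup H]
    (f : G →+ H) (hf : Function.Surjective f) : Nat.card f.ker * Nat.card H = Nat.card G := by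
  rw [← f.ker.card_mul_index, AddSubgroup.index_ker, f.range_eq_top_of_surjective hf,
    AddSubgroup.card_top]

theorem Finset.card_filter_exists_le_sum {α β : Type*} [Fintype β] (s : Finset α)
    (p : α → β → Prop) [∀ a, DecidablePred (p a)] [DecidablePred fun b => ∃ a ∈ s, p a b] :
    #{b | ∃ a ∈ s, p a b} ≤ ∑ a ∈ s, #{b | p a b} := by
  classical
  calc #{b | ∃ a ∈ s, p a b} = #(s.biUnion fun a => {b | p a b}) := by
        congr 1; ext b; simp
    _ ≤ _ := card_biUnion_le

theorem Fintype.card_filter_forall_apply {ι α : Type*} [Fintype ι] [DecidableEq ι] [Fintype α]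
    (p : α → Prop) [DecidablePred p] [DecidablePred fun f : ι → α => ∀ i, p (f i)] :
    #{f : ι → α | ∀ i, p (f i)} = #{a | p a} ^ Fintype.card ι := by
  calc #{f : ι → α | ∀ i, p (f i)}
        = #(Fintype.piFinset fun _ : ι => ({a | p a} : Finset α)) := by
        congr 1; ext f; simp
    _ = _ := by simp

namespace Matrix

variable {K m n : Type*} [Field K] [Fintype n] [DecidableEq n]

theorem mulVec_left_surjective {v : n → K} (hv : v ≠ 0) :
    Function.Surjective fun B : Matrix m n K => B *ᵥ v := by
  obtain ⟨j, hj⟩ := Function.ne_iff.mp hv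
  intro w
  refine ⟨vecMulVec w (Pi.single j (v j)⁻¹), ?_⟩
  simp [vecMulVec_mulVec, single_dotProduct, inv_mul_cancel₀ hj]

variable [Fintype K] [DecidableEq K] [Fintype m] [DecidableEq m]

theorem card_filter_mulVec_eq_mul_card_pow {x y : n → K} (hxy : x ≠ y) :
    #{B : Matrix m n K | B *ᵥ x = B *ᵥ y} * Fintype.card K ^ Fintype.card m
      = Fintype.card (Matrix m n K) := by
  let f : Matrix m n K →+ (m → K) :=
    { toFun := fun B => B *ᵥ (x - y)
      map_zero' := zero_mulVec _
      map_add' := fun A B => add_mulVec A B _ }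
  have hker : #{B : Matrix m n K | B *ᵥ x = B *ᵥ y} = Nat.card f.ker := by
    rw [← Fintype.card_coe, Nat.card_eq_fintype_card]
    refine Fintype.card_congr (Equiv.subtypeEquivRight fun B => ?_)
    simp [f, mulVec_sub, sub_eq_zero]
  rw [hker, ← Fintype.card_fun, ← Nat.card_eq_fintype_card, ← Nat.card_eq_fintype_card]
  exact f.card_ker_mul_card_of_surjective (mulVec_left_surjective (sub_ne_zero.mpr hxy))

theorem card_filter_exists_mulVec_eq_div_le {T : Finset (n → K)} {x : n → K} (hx : x ∉ T) :
    (#{B : Matrix m n K | ∃ u ∈ T, B *ᵥ x = B *ᵥ u} : ℝ) / Fintype.card (Matrix m n K)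
      ≤ #T / Fintype.card K ^ Fintype.card m := by
  rw [div_le_div_iff₀ (by positivity) (by positivity)]
  calc (#{B : Matrix m n K | ∃ u ∈ T, B *ᵥ x = B *ᵥ u} : ℝ) * Fintype.card K ^ Fintype.card m
      ≤ (∑ u ∈ T, #{B : Matrix m n K | B *ᵥ x = B *ᵥ u} : ℕ)
          * Fintype.card K ^ Fintype.card m := by
        gcongr
        exact_mod_cast card_filter_exists_le_sum T fun u B => B *ᵥ x = B *ᵥ u
    _ = ∑ _u ∈ T, (Fintype.card (Matrix m n K) : ℝ) := by
        push_cast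
        rw [sum_mul]
        refine sum_congr rfl fun u hu => ?_
        exact_mod_cast card_filter_mulVec_eq_mul_card_pow (ne_of_mem_of_not_mem hu hx).symm
    _ = #T * Fintype.card (Matrix m n K) := by simp

end Matrix

theorem all_hashes_collide_bound_general (n' m t : ℕ) (hm : 2 ≤ m)
    (ht : t ≤ 2 ^ (m - 2)) (T' : Finset (Fin n' → ZMod 2)) (hT' : T'.card = t) :
    ((Finset.univ.filter fun B : Fin n' → Matrix (Fin m) (Fin n') (ZMod 2) =>
        ∃ x, x ∉ T' ∧ ∀ i, ∃ u ∈ T', (B i).mulVec x = (B i).mulVec u).card : ℝ)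
      / Fintype.card (Fin n' → Matrix (Fin m) (Fin n') (ZMod 2))
      ≤ 1 / 2 ^ n' := by
  have hcollide : ∀ x ∉ T', (#{A : Matrix (Fin m) (Fin n') (ZMod 2) |
      ∃ u ∈ T', A.mulVec x = A.mulVec u} : ℝ) / Fintype.card (Matrix (Fin m) (Fin n') (ZMod 2))
      ≤ 1 / 4 := by
    intro x hx
    refine (Matrix.card_filter_exists_mulVec_eq_div_le hx).trans ?_
    have h4t : 4 * t ≤ 2 ^ m := by
      rw [show m = 2 + (m - 2) by omega, pow_add]; omega
    rw [hT', div_le_div_iff₀ (by positivity) (by norm_num)]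
    simp only [ZMod.card, Fintype.card_fin]
    exact_mod_cast (by omega : t * 4 ≤ 1 * 2 ^ m)
  calc _ ≤ (∑ x ∈ T'ᶜ, #{B : Fin n' → Matrix (Fin m) (Fin n') (ZMod 2) |
          ∀ i, ∃ u ∈ T', (B i).mulVec x = (B i).mulVec u} : ℝ)
        / Fintype.card (Fin n' → Matrix (Fin m) (Fin n') (ZMod 2)) := by
        gcongr
        simp_rw [← mem_compl (s := T')]
        exact_mod_cast card_filter_exists_le_sum T'ᶜ fun x (B : Fin n' → Matrix _ _ _) =>
          ∀ i, ∃ u ∈ T', (B i).mulVec x = (B i).mulVec u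
    _ = ∑ x ∈ T'ᶜ, ((#{A : Matrix (Fin m) (Fin n') (ZMod 2) |
          ∃ u ∈ T', A.mulVec x = A.mulVec u} : ℝ)
          / Fintype.card (Matrix (Fin m) (Fin n') (ZMod 2))) ^ n' := by
        rw [sum_div]
        refine sum_congr rfl fun x _ => ?_
        rw [Fintype.card_filter_forall_apply fun A : Matrix (Fin m) (Fin n') (ZMod 2) =>
          ∃ u ∈ T', A.mulVec x = A.mulVec u, Fintype.card_fun, Fintype.card_fin, div_pow]
        push_cast; rfl
    _ ≤ ∑ _x ∈ T'ᶜ, (1 / 4 : ℝ) ^ n' :=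
        sum_le_sum fun x hx => pow_le_pow_left₀ (by positivity) (hcollide x (mem_compl.mp hx)) n'
    _ ≤ 2 ^ n' * (1 / 4) ^ n' := by
        rw [sum_const, nsmul_eq_mul]
        gcongr
        exact_mod_cast (card_le_univ _).trans_eq (by simp)
    _ = 1 / 2 ^ n' := by
        rw [← mul_pow, ← _root_.one_div_pow]; norm_num

/-- Key counting lemma: with n' independent uniform linear hashes to {0,1}^m and
|T'| ≤ 2^{m−2}, the probability that some x ∉ T' collides with T' under every
hash is at most 2^{n'}·(1/4)^{n'} = 2^{−n'}. -/
theorem all_hashes_collide_bound (n' m t : ℕ) (hn' : 0 < n') (hm : 2 ≤ m)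
    (ht : t ≤ 2 ^ (m - 2)) (T' : Finset (Fin n' → ZMod 2)) (hT' : T'.card = t) :
    ((Finset.univ.filter fun B : Fin n' → Matrix (Fin m) (Fin n') (ZMod 2) =>
        ∃ x, x ∉ T' ∧ ∀ i, ∃ u ∈ T', (B i).mulVec x = (B i).mulVec u).card : ℝ)
      / Fintype.card (Fin n' → Matrix (Fin m) (Fin n') (ZMod 2))
      ≤ 1 / 2 ^ n' :=
  all_hashes_collide_bound_general n' m t hm ht T' hT'
end
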